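/- arXiv:2305.17567 — 2 statements merged into one kernel-verified Lean document; each statement's English description precedes it below -/
import Mathlib

section
/- Assume the stationary Nash equilibrium p** lies in P² = [p̲, p̄]². Then for every ε > 0 there exists M > 0 such that every p ∈ P² with ε(p) ≥ ε satisfies 𝒢(p) ≥ M, where ε(p) = |p_H** − p_H|/(b_H + c_H) + |p_L** − p_L|/(b_L + c_L). -/
open Real Filter

/-- Deterministic utility u_i(p_i, r_i) = a_i - b_i * p_i + c_i * (r_i - p_i). -/
noncomputable def util (a b c pi ri : ℝ) : ℝ := a - b * pi + c * (ri - pi)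

/-- MNL demand of product H. -/
noncomputable def demH (aH aL bH bL cH cL : ℝ) (p r : ℝ × ℝ) : ℝ :=
  Real.exp (util aH bH cH p.1 r.1) /
    (1 + Real.exp (util aH bH cH p.1 r.1) + Real.exp (util aL bL cL p.2 r.2))

/-- MNL demand of product L. -/
noncomputable def demL (aH aL bH bL cH cL : ℝ) (p r : ℝ × ℝ) : ℝ :=
  Real.exp (util aL bL cL p.2 r.2) /
    (1 + Real.exp (util aH bH cH p.1 r.1) + Real.exp (util aL bL cL p.2 r.2))

/-- Scaled derivative of the log-revenue of firm H. -/
noncomputable def GrH (aH aL bH bL cH cL : ℝ) (p r : ℝ × ℝ) : ℝ :=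
  1 / ((bH + cH) * p.1) + demH aH aL bH bL cH cL p r - 1

/-- Scaled derivative of the log-revenue of firm L. -/
noncomputable def GrL (aH aL bH bL cH cL : ℝ) (p r : ℝ × ℝ) : ℝ :=
  1 / ((bL + cL) * p.2) + demL aH aL bH bL cH cL p r - 1

/-- Stationary Nash equilibrium: positive price vector on which both scaled
derivatives vanish at price = reference price. -/
def IsSNE (aH aL bH bL cH cL : ℝ) (p : ℝ × ℝ) : Prop :=
  0 < p.1 ∧ 0 < p.2 ∧ GrH aH aL bH bL cH cL p p = 0 ∧ GrL aH aL bH bL cH cL p p = 0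

/-- Projection onto the interval [lo, hi]. -/
noncomputable def proj (lo hi x : ℝ) : ℝ := min (max x lo) hi

/-- Membership of a price vector in P² = [lo, hi]². -/
def InP2 (lo hi : ℝ) (x : ℝ × ℝ) : Prop := x.1 ∈ Set.Icc lo hi ∧ x.2 ∈ Set.Icc lo hi

/-- Squared Euclidean norm on ℝ². -/
noncomputable def norm2sq (x : ℝ × ℝ) : ℝ := x.1 ^ 2 + x.2 ^ 2

/-- The OPGA dynamics for price path `pp` and reference-price path `rr`. -/
def OPGA (aH aL bH bL cH cL lo hi alpha : ℝ) (eta : ℕ → ℝ) (pp rr : ℕ → ℝ × ℝ) : Prop :=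
  (∀ t, (pp (t+1)).1 =
      proj lo hi ((pp t).1 + eta t * (bH + cH) * GrH aH aL bH bL cH cL (pp t) (rr t))) ∧
  (∀ t, (pp (t+1)).2 =
      proj lo hi ((pp t).2 + eta t * (bL + cL) * GrL aH aL bH bL cH cL (pp t) (rr t))) ∧
  (∀ t, (rr (t+1)).1 = alpha * (rr t).1 + (1 - alpha) * (pp t).1) ∧
  (∀ t, (rr (t+1)).2 = alpha * (rr t).2 + (1 - alpha) * (pp t).2)

/-- The weighted ℓ¹ distance to the SNE. -/
noncomputable def wdist (bH bL cH cL : ℝ) (pstar p : ℝ × ℝ) : ℝ :=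
  |pstar.1 - p.1| / (bH + cH) + |pstar.2 - p.2| / (bL + cL)

/-- The function 𝒢(p) = sign(p_H** − p_H)·G_H(p,p) + sign(p_L** − p_L)·G_L(p,p). -/
noncomputable def calG (aH aL bH bL cH cL : ℝ) (pstar p : ℝ × ℝ) : ℝ :=
  Real.sign (pstar.1 - p.1) * GrH aH aL bH bL cH cL p p +
  Real.sign (pstar.2 - p.2) * GrL aH aL bH bL cH cL p p

/-- The function ℋ(p) used in the local analysis around the SNE. -/
noncomputable def calH (aH aL bH bL cH cL : ℝ) (pstar p : ℝ × ℝ) : ℝ :=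
  (bH + cH) * GrH aH aL bH bL cH cL p p * (pstar.1 - p.1) +
  (bL + cL) * GrL aH aL bH bL cH cL p p * (pstar.2 - p.2)

/-- The constant M_G bounding |G_i| on P². -/
noncomputable def MG (bH bL cH cL lo : ℝ) : ℝ :=
  max (1 / ((bH + cH) * lo)) (1 / ((bL + cL) * lo)) + 1

/-- The Lipschitz constant l_r = (1/4)·√(c_H² + c_L²). -/
noncomputable def lr (cH cL : ℝ) : ℝ := (1 / 4) * Real.sqrt (cH ^ 2 + cL ^ 2)

/-!
Since `G_i(p**, p**) = 0`, `𝒢(p)` splits into a reciprocal part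
`Σ_i sign(p_i** - p_i) (1/(k_i p_i) - 1/(k_i p_i**))` with `k_i = b_i + c_i`, and a demand part
`Σ_i sign(p_i** - p_i) (d_i(p, p) - d_i(p**, p**))`.
On `[p̲, p̄]` the reciprocal part is at least `ε(p) / p̄²`, because
`1/(k x) - 1/(k y) = (y - x)/(k x y)`. The demand part is nonnegative: in terms of the
attractions `A_i = exp(a_i - b_i p_i)`, which move against the prices, it is
`Σ_i sign(A_i - A_i**) (A_i/(1 + A_H + A_L) - A_i**/(1 + A_H** + A_L**))`, and clearing
denominators exhibits it as a sum of nonnegative terms. Hence `M = ε / p̄²` works.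
-/

theorem Real.sign_mul_self_eq_abs (r : ℝ) : Real.sign r * r = |r| := by
  rcases lt_trichotomy r 0 with h | rfl | h
  · rw [Real.sign_of_neg h, abs_of_neg h, neg_one_mul]
  · simp
  · rw [Real.sign_of_pos h, abs_of_pos h, one_mul]

theorem Real.sign_mul_le_abs (r x : ℝ) : Real.sign r * x ≤ |x| := by
  rcases Real.sign_apply_eq r with h | h | h <;> rw [h]
  · simpa using neg_le_abs x
  · simp
  · simpa using le_abs_self x

theorem StrictAnti.sign_sub {f : ℝ → ℝ} (hf : StrictAnti f) (x y : ℝ) :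
    Real.sign (f x - f y) = Real.sign (y - x) := by
  rcases lt_trichotomy x y with h | rfl | h
  · rw [Real.sign_of_pos (sub_pos.2 (hf h)), Real.sign_of_pos (sub_pos.2 h)]
  · simp
  · rw [Real.sign_of_neg (sub_neg.2 (hf h)), Real.sign_of_neg (sub_neg.2 h)]

theorem abs_sub_div_le_sign_mul_one_div_sub {k x y hi : ℝ} (hk : 0 < k) (hx : 0 < x)
    (hy : 0 < y) (hxhi : x ≤ hi) (hyhi : y ≤ hi) :
    |y - x| / (k * hi ^ 2) ≤ Real.sign (y - x) * (1 / (k * x) - 1 / (k * y)) := by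
  have hdiff : 1 / (k * x) - 1 / (k * y) = (y - x) / (k * (x * y)) := by
    field_simp
  have hhi : 0 ≤ hi := hx.le.trans hxhi
  rw [hdiff, ← mul_div_assoc, Real.sign_mul_self_eq_abs, sq]
  gcongr

theorem sign_mul_logit_share_sub_add_nonneg {A B A' B' : ℝ} (hA : 0 ≤ A) (hB : 0 ≤ B)
    (hA' : 0 ≤ A') (hB' : 0 ≤ B') :
    0 ≤ Real.sign (A - A') * (A / (1 + A + B) - A' / (1 + A' + B')) +
      Real.sign (B - B') * (B / (1 + A + B) - B' / (1 + A' + B')) := by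
  set sA := Real.sign (A - A')
  set sB := Real.sign (B - B')
  have hclear : sA * (A / (1 + A + B) - A' / (1 + A' + B')) +
      sB * (B / (1 + A + B) - B' / (1 + A' + B')) =
      (sA * (A - A') + sB * (B - B') + B' * (|A - A'| - sB * (A - A')) +
        A' * (|B - B'| - sA * (B - B'))) / ((1 + A + B) * (1 + A' + B')) := by
    rw [← Real.sign_mul_self_eq_abs (A - A'), ← Real.sign_mul_self_eq_abs (B - B')]
    field_simp
    ring
  rw [hclear, Real.sign_mul_self_eq_abs, Real.sign_mul_self_eq_abs]
  have hAgap := sub_nonneg.2 (Real.sign_mul_le_abs (B - B') (A - A'))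
  have hBgap := sub_nonneg.2 (Real.sign_mul_le_abs (A - A') (B - B'))
  positivity

theorem util_self (a b c x : ℝ) : util a b c x x = a - b * x := by
  rw [util, sub_self, mul_zero, add_zero]

theorem sign_mul_demand_sub_add_nonneg (aH aL : ℝ) {bH bL : ℝ} (hbH : 0 < bH) (hbL : 0 < bL)
    (cH cL : ℝ) (p q : ℝ × ℝ) :
    0 ≤ Real.sign (q.1 - p.1) * (demH aH aL bH bL cH cL p p - demH aH aL bH bL cH cL q q) +
      Real.sign (q.2 - p.2) * (demL aH aL bH bL cH cL p p - demL aH aL bH bL cH cL q q) := by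
  have attraction_anti : ∀ {a b : ℝ}, 0 < b → StrictAnti fun x => exp (a - b * x) :=
    fun hb _ _ hxy => exp_lt_exp.2 (by nlinarith)
  simp only [demH, demL, util_self]
  rw [← (attraction_anti (a := aH) hbH).sign_sub p.1 q.1,
    ← (attraction_anti (a := aL) hbL).sign_sub p.2 q.2]
  exact sign_mul_logit_share_sub_add_nonneg (exp_pos _).le (exp_pos _).le (exp_pos _).le
    (exp_pos _).le

theorem calG_eq_of_isSNE {aH aL bH bL cH cL : ℝ} {pstar : ℝ × ℝ}
    (hsne : IsSNE aH aL bH bL cH cL pstar) (p : ℝ × ℝ) :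
    calG aH aL bH bL cH cL pstar p =
      Real.sign (pstar.1 - p.1) * (1 / ((bH + cH) * p.1) - 1 / ((bH + cH) * pstar.1)) +
      Real.sign (pstar.2 - p.2) * (1 / ((bL + cL) * p.2) - 1 / ((bL + cL) * pstar.2)) +
      (Real.sign (pstar.1 - p.1) *
          (demH aH aL bH bL cH cL p p - demH aH aL bH bL cH cL pstar pstar) +
        Real.sign (pstar.2 - p.2) *
          (demL aH aL bH bL cH cL p p - demL aH aL bH bL cH cL pstar pstar)) := by
  obtain ⟨-, -, hH, hL⟩ := hsne
  rw [calG, ← sub_zero (GrH _ _ _ _ _ _ p p), ← hH, ← sub_zero (GrL _ _ _ _ _ _ p p), ← hL,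
    GrH, GrH, GrL, GrL]
  ring

theorem calG_lower_bound_general (aH aL bH bL cH cL : ℝ)
    (hbH : 0 < bH) (hbL : 0 < bL) (hcH : 0 < cH) (hcL : 0 < cL)
    (lo hi : ℝ) (hlo : 0 < lo)
    (pstar : ℝ × ℝ) (hsne : IsSNE aH aL bH bL cH cL pstar)
    (hstar : InP2 lo hi pstar) :
    ∀ eps > (0 : ℝ), ∃ M > (0 : ℝ), ∀ p : ℝ × ℝ, InP2 lo hi p →
      eps ≤ wdist bH bL cH cL pstar p → M ≤ calG aH aL bH bL cH cL pstar p := by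
  intro eps heps
  obtain ⟨⟨hq1lo, hq1hi⟩, ⟨hq2lo, hq2hi⟩⟩ := hstar
  have hhi : 0 < hi := hlo.trans_le (hq1lo.trans hq1hi)
  refine ⟨eps / hi ^ 2, by positivity, fun p ⟨⟨hp1lo, hp1hi⟩, ⟨hp2lo, hp2hi⟩⟩ hdist => ?_⟩
  have hkH : 0 < bH + cH := add_pos hbH hcH
  have hkL : 0 < bL + cL := add_pos hbL hcL
  calc eps / hi ^ 2 ≤ wdist bH bL cH cL pstar p / hi ^ 2 := by gcongr
    _ = |pstar.1 - p.1| / ((bH + cH) * hi ^ 2) + |pstar.2 - p.2| / ((bL + cL) * hi ^ 2) := by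
      rw [wdist]; field_simp
    _ ≤ calG aH aL bH bL cH cL pstar p := by
      rw [calG_eq_of_isSNE hsne]
      linarith [abs_sub_div_le_sign_mul_one_div_sub hkH (hlo.trans_le hp1lo)
          (hlo.trans_le hq1lo) hp1hi hq1hi,
        abs_sub_div_le_sign_mul_one_div_sub hkL (hlo.trans_le hp2lo)
          (hlo.trans_le hq2lo) hp2hi hq2hi,
        sign_mul_demand_sub_add_nonneg aH aL hbH hbL cH cL p pstar]

theorem calG_lower_bound (aH aL bH bL cH cL : ℝ)
    (hbH : 0 < bH) (hbL : 0 < bL) (hcH : 0 < cH) (hcL : 0 < cL)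
    (lo hi : ℝ) (hlo : 0 < lo) (hlohi : lo ≤ hi)
    (pstar : ℝ × ℝ) (hsne : IsSNE aH aL bH bL cH cL pstar)
    (hstar : InP2 lo hi pstar) :
    ∀ eps > (0 : ℝ), ∃ M > (0 : ℝ), ∀ p : ℝ × ℝ, InP2 lo hi p →
      eps ≤ wdist bH bL cH cL pstar p → M ≤ calG aH aL bH bL cH cL pstar p :=
  calG_lower_bound_general aH aL bH bL cH cL hbH hbL hcH hcL lo hi hlo pstar hsne hstar
end

section
/- Along the OPGA dynamics, for every t ≥ 1 one has ‖r^t − p^t‖₂² ≤ ((1 + α²)/2)·‖r^{t−1} − p^{t−1}‖₂² + λ₀·(η^{t−1})², where λ₀ = ((1 + α²)/(1 − α²))·M_G²·((b_H + c_H)² + (b_L + c_L)²). -/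
open Real Filter

lemma proj_mem' (lo hi x : ℝ) (h : lo ≤ hi) : lo ≤ proj lo hi x ∧ proj lo hi x ≤ hi :=
  ⟨le_min (le_max_right _ _) h, min_le_right _ _⟩

lemma proj_dist (lo hi x p : ℝ) (h1 : lo ≤ p) (h2 : p ≤ hi) : |proj lo hi x - p| ≤ |x - p| := by
  have hub : proj lo hi x ≤ max x p := (min_le_left _ _).trans (max_le_max le_rfl h1)
  have hlb : min x p ≤ proj lo hi x :=
    le_min ((min_le_left x p).trans (le_max_left _ _)) ((min_le_right x p).trans h2)
  rw [abs_sub_le_iff]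
  rcases le_total x p with h | h
  · rw [abs_of_nonpos (by linarith), min_eq_left h] at *
    rw [max_eq_right h] at hub
    constructor <;> linarith
  · rw [abs_of_nonneg (by linarith), min_eq_right h] at *
    rw [max_eq_left h] at hub
    constructor <;> linarith

lemma key_ineq (α A B : ℝ) (h0 : 0 ≤ α) (h1 : α < 1) :
    (α * A + B) ^ 2 ≤ ((1 + α ^ 2) / 2) * A ^ 2 + ((1 + α ^ 2) / (1 - α ^ 2)) * B ^ 2 := by
  have h : 0 < 1 - α ^ 2 := by nlinarith
  rw [div_mul_eq_mul_div (1 + α ^ 2) (1 - α ^ 2) (B ^ 2), ← sub_le_iff_le_add',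
    le_div_iff₀ h]
  nlinarith [sq_nonneg ((1 - α ^ 2) * A - 2 * α * B)]

lemma GrH_bound (aH aL bH bL cH cL : ℝ) (hbH : 0 < bH + cH) (hbL : 0 < bL + cL)
    (lo : ℝ) (hlo : 0 < lo) (p r : ℝ × ℝ) (h1 : lo ≤ p.1) :
    |GrH aH aL bH bL cH cL p r| ≤ MG bH bL cH cL lo := by
  have he := Real.exp_pos (util aH bH cH p.1 r.1)
  have hf := Real.exp_pos (util aL bL cL p.2 r.2)
  have hden : (0:ℝ) < 1 + Real.exp (util aH bH cH p.1 r.1) + Real.exp (util aL bL cL p.2 r.2) := by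
    linarith
  have hd0 : 0 < demH aH aL bH bL cH cL p r := div_pos he hden
  have hd1 : demH aH aL bH bL cH cL p r < 1 := (div_lt_one hden).mpr (by linarith)
  have hp : 0 < p.1 := lt_of_lt_of_le hlo h1
  have hinv : 1 / ((bH + cH) * p.1) ≤ 1 / ((bH + cH) * lo) := by
    gcongr
  have hM : 1 / ((bH + cH) * lo) ≤ max (1 / ((bH + cH) * lo)) (1 / ((bL + cL) * lo)) :=
    le_max_left _ _
  have hpos : (0:ℝ) < 1 / ((bH + cH) * lo) := by positivity
  have hinv0 : (0:ℝ) < 1 / ((bH + cH) * p.1) := by positivity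
  rw [abs_le]; unfold GrH MG; constructor <;> linarith

lemma GrL_bound (aH aL bH bL cH cL : ℝ) (hbH : 0 < bH + cH) (hbL : 0 < bL + cL)
    (lo : ℝ) (hlo : 0 < lo) (p r : ℝ × ℝ) (h2 : lo ≤ p.2) :
    |GrL aH aL bH bL cH cL p r| ≤ MG bH bL cH cL lo := by
  have he := Real.exp_pos (util aH bH cH p.1 r.1)
  have hf := Real.exp_pos (util aL bL cL p.2 r.2)
  have hden : (0:ℝ) < 1 + Real.exp (util aH bH cH p.1 r.1) + Real.exp (util aL bL cL p.2 r.2) := by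
    linarith
  have hd0 : 0 < demL aH aL bH bL cH cL p r := div_pos hf hden
  have hd1 : demL aH aL bH bL cH cL p r < 1 := (div_lt_one hden).mpr (by linarith)
  have hp : 0 < p.2 := lt_of_lt_of_le hlo h2
  have hinv : 1 / ((bL + cL) * p.2) ≤ 1 / ((bL + cL) * lo) := by
    gcongr
  have hM : 1 / ((bL + cL) * lo) ≤ max (1 / ((bH + cH) * lo)) (1 / ((bL + cL) * lo)) :=
    le_max_right _ _
  have hpos : (0:ℝ) < 1 / ((bL + cL) * lo) := by positivity
  have hinv0 : (0:ℝ) < 1 / ((bL + cL) * p.2) := by positivity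
  rw [abs_le]; unfold GrL MG; constructor <;> linarith

theorem ref_price_gap_recursion (aH aL bH bL cH cL : ℝ)
    (hbH : 0 < bH) (hbL : 0 < bL) (hcH : 0 < cH) (hcL : 0 < cL)
    (lo hi : ℝ) (hlo : 0 < lo) (hlohi : lo ≤ hi) (alpha : ℝ) (halpha0 : 0 ≤ alpha) (halpha1 : alpha < 1)
    (eta : ℕ → ℝ) (hnn : ∀ t, 0 ≤ eta t)
    (pp rr : ℕ → ℝ × ℝ) (hp0 : InP2 lo hi (pp 0)) (hr0 : InP2 lo hi (rr 0))
    (hdyn : OPGA aH aL bH bL cH cL lo hi alpha eta pp rr) :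
    ∀ t : ℕ, norm2sq (rr (t+1) - pp (t+1)) ≤
      ((1 + alpha ^ 2) / 2) * norm2sq (rr t - pp t) +
      ((1 + alpha ^ 2) / (1 - alpha ^ 2)) * MG bH bL cH cL lo ^ 2 *
        ((bH + cH) ^ 2 + (bL + cL) ^ 2) * (eta t) ^ 2 := by
  obtain ⟨hdH, hdL, hrH, hrL⟩ := hdyn
  have hbH' : 0 < bH + cH := by linarith
  have hbL' : 0 < bL + cL := by linarith
  have hmem : ∀ t, InP2 lo hi (pp t) := by
    intro t
    induction t with
    | zero => exact hp0
    | succ n _ =>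
      refine ⟨Set.mem_Icc.mpr ?_, Set.mem_Icc.mpr ?_⟩
      · rw [hdH n]; exact proj_mem' _ _ _ hlohi
      · rw [hdL n]; exact proj_mem' _ _ _ hlohi
  intro t
  set M := MG bH bL cH cL lo with hMdef
  obtain ⟨hm1, hm2⟩ := hmem t
  rw [Set.mem_Icc] at hm1 hm2
  -- bounds on price movement
  have hB1 : |(pp (t+1)).1 - (pp t).1| ≤ eta t * ((bH + cH) * M) := by
    rw [hdH t]
    calc |proj lo hi ((pp t).1 + eta t * (bH + cH) * GrH aH aL bH bL cH cL (pp t) (rr t)) - (pp t).1|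
        ≤ |(pp t).1 + eta t * (bH + cH) * GrH aH aL bH bL cH cL (pp t) (rr t) - (pp t).1| :=
          proj_dist _ _ _ _ hm1.1 hm1.2
      _ = eta t * (bH + cH) * |GrH aH aL bH bL cH cL (pp t) (rr t)| := by
          rw [add_sub_cancel_left, abs_mul, abs_of_nonneg (mul_nonneg (hnn t) hbH'.le)]
      _ ≤ eta t * ((bH + cH) * M) := by
          rw [mul_assoc]
          exact mul_le_mul_of_nonneg_left
            (mul_le_mul_of_nonneg_left
              (GrH_bound aH aL bH bL cH cL hbH' hbL' lo hlo _ _ hm1.1) hbH'.le) (hnn t)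
  have hB2 : |(pp (t+1)).2 - (pp t).2| ≤ eta t * ((bL + cL) * M) := by
    rw [hdL t]
    calc |proj lo hi ((pp t).2 + eta t * (bL + cL) * GrL aH aL bH bL cH cL (pp t) (rr t)) - (pp t).2|
        ≤ |(pp t).2 + eta t * (bL + cL) * GrL aH aL bH bL cH cL (pp t) (rr t) - (pp t).2| :=
          proj_dist _ _ _ _ hm2.1 hm2.2
      _ = eta t * (bL + cL) * |GrL aH aL bH bL cH cL (pp t) (rr t)| := by
          rw [add_sub_cancel_left, abs_mul, abs_of_nonneg (mul_nonneg (hnn t) hbL'.le)]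
      _ ≤ eta t * ((bL + cL) * M) := by
          rw [mul_assoc]
          exact mul_le_mul_of_nonneg_left
            (mul_le_mul_of_nonneg_left
              (GrL_bound aH aL bH bL cH cL hbH' hbL' lo hlo _ _ hm2.1) hbL'.le) (hnn t)
  set A1 := (rr t).1 - (pp t).1
  set A2 := (rr t).2 - (pp t).2
  set B1 := (pp t).1 - (pp (t+1)).1 with hB1def
  set B2 := (pp t).2 - (pp (t+1)).2 with hB2def
  have e1 : (rr (t+1) - pp (t+1)).1 = alpha * A1 + B1 := by
    simp only [Prod.fst_sub, hrH t, hB1def]; ring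
  have e2 : (rr (t+1) - pp (t+1)).2 = alpha * A2 + B2 := by
    simp only [Prod.snd_sub, hrL t, hB2def]; ring
  have k1 := key_ineq alpha A1 B1 halpha0 halpha1
  have k2 := key_ineq alpha A2 B2 halpha0 halpha1
  have b1sq : B1 ^ 2 ≤ (eta t * ((bH + cH) * M)) ^ 2 := by
    rw [← sq_abs B1, hB1def, abs_sub_comm]
    exact pow_le_pow_left₀ (abs_nonneg _) hB1 2
  have b2sq : B2 ^ 2 ≤ (eta t * ((bL + cL) * M)) ^ 2 := by
    rw [← sq_abs B2, hB2def, abs_sub_comm]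
    exact pow_le_pow_left₀ (abs_nonneg _) hB2 2
  have hC : 0 ≤ (1 + alpha ^ 2) / (1 - alpha ^ 2) := by
    apply div_nonneg (by positivity); nlinarith
  have sumB : B1 ^ 2 + B2 ^ 2 ≤ M ^ 2 * ((bH + cH) ^ 2 + (bL + cL) ^ 2) * (eta t) ^ 2 := by
    have hr : (eta t * ((bH + cH) * M)) ^ 2 + (eta t * ((bL + cL) * M)) ^ 2
        = M ^ 2 * ((bH + cH) ^ 2 + (bL + cL) ^ 2) * (eta t) ^ 2 := by ring
    linarith
  have final := mul_le_mul_of_nonneg_left sumB hC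
  have hn1 : norm2sq (rr (t+1) - pp (t+1)) = (alpha * A1 + B1) ^ 2 + (alpha * A2 + B2) ^ 2 := by
    rw [norm2sq, e1, e2]
  have hn0 : norm2sq (rr t - pp t) = A1 ^ 2 + A2 ^ 2 := by
    simp [norm2sq, Prod.fst_sub, Prod.snd_sub, A1, A2]
  rw [hn1, hn0]
  calc (alpha * A1 + B1) ^ 2 + (alpha * A2 + B2) ^ 2
      ≤ (((1 + alpha ^ 2) / 2) * A1 ^ 2 + ((1 + alpha ^ 2) / (1 - alpha ^ 2)) * B1 ^ 2)
        + (((1 + alpha ^ 2) / 2) * A2 ^ 2 + ((1 + alpha ^ 2) / (1 - alpha ^ 2)) * B2 ^ 2) :=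
        add_le_add k1 k2
    _ = ((1 + alpha ^ 2) / 2) * (A1 ^ 2 + A2 ^ 2)
        + ((1 + alpha ^ 2) / (1 - alpha ^ 2)) * (B1 ^ 2 + B2 ^ 2) := by ring
    _ ≤ ((1 + alpha ^ 2) / 2) * (A1 ^ 2 + A2 ^ 2)
        + ((1 + alpha ^ 2) / (1 - alpha ^ 2)) *
          (M ^ 2 * ((bH + cH) ^ 2 + (bL + cL) ^ 2) * (eta t) ^ 2) := by linarith [final]
    _ = ((1 + alpha ^ 2) / 2) * (A1 ^ 2 + A2 ^ 2)
        + ((1 + alpha ^ 2) / (1 - alpha ^ 2)) * M ^ 2 *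
          ((bH + cH) ^ 2 + (bL + cL) ^ 2) * (eta t) ^ 2 := by ring
end
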